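/- Let X be a {0,1}-valued random variable and let Y be obtained from X by flipping its value with probability p, 0 < p < 1/2, independently of X. Then I(Y) ≤ (1−2p)²·I(X), where I(Z) = 1 − H(Z) is the Shannon information of a bit Z (H the binary entropy in bits). -/

import Mathlib

/-- Binary Shannon entropy (in bits) of a bit with `Pr[·=1] = q`. -/
noncomputable def binEnt (q : ℝ) : ℝ :=
  -(q * Real.logb 2 q) - (1 - q) * Real.logb 2 (1 - q)

/-- Shannon information `I = 1 − H` of a bit with `Pr[·=1] = q`. -/
noncomputable def binInfo (q : ℝ) : ℝ := 1 - binEnt q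

/-!
In terms of the bias `x = Pr[·=1] − Pr[·=0]` the channel multiplies the bias by `λ = 1 − 2p`,
and the information of a bit is `biasInfo x / (2 ln 2)` with
`biasInfo x = (1 + x) log (1 + x) + (1 - x) log (1 - x)`; so the claim is
`biasInfo (λ x) ≤ λ² biasInfo x`. Both sides vanish at `x = 0` and have derivatives
`λ a (λ x)` and `λ² a x`, where `a x = log (1 + x) - log (1 - x) = 2 artanh x`. These compare
because `a (λ x) ≤ λ a x`, which holds since `a' x = 2 / (1 - x²)` increases on `[0, 1)`.
-/

open Real Set

lemma hasDerivAt_log_one_add_sub_log_one_sub {x : ℝ} (hx : x ∈ Ioo (-1) 1) :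
    HasDerivAt (fun t => log (1 + t) - log (1 - t)) (2 / (1 - x ^ 2)) x := by
  obtain ⟨hx0, hx1⟩ := hx
  have hplus := ((hasDerivAt_id' x).const_add 1).log (by linarith)
  have hminus := ((hasDerivAt_id' x).const_sub 1).log (by linarith)
  refine (hplus.sub hminus).congr_deriv ?_
  have : 1 + x ≠ 0 := by linarith
  have : 1 - x ≠ 0 := by linarith
  have : 1 - x ^ 2 ≠ 0 := by nlinarith
  field_simp
  ring

lemma log_one_add_mul_sub_log_one_sub_mul_le {l x : ℝ} (hl0 : 0 ≤ l) (hl1 : l ≤ 1)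
    (hx0 : 0 ≤ x) (hx1 : x < 1) :
    log (1 + l * x) - log (1 - l * x) ≤ l * (log (1 + x) - log (1 - x)) := by
  have hIoo : ∀ t ∈ Icc 0 x, t ∈ Ioo (-1) 1 ∧ l * t ∈ Ioo (-1) 1 := fun t ⟨ht0, htx⟩ =>
    ⟨⟨by linarith, by linarith⟩, ⟨by nlinarith, by nlinarith⟩⟩
  have hlhs : ∀ t ∈ Icc 0 x, HasDerivAt (fun s => log (1 + l * s) - log (1 - l * s))
      (2 / (1 - (l * t) ^ 2) * l) t := fun t ht =>
    (hasDerivAt_log_one_add_sub_log_one_sub (hIoo t ht).2).comp t ((hasDerivAt_id t).const_mul l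
      |>.congr_deriv (mul_one l))
  have hrhs : ∀ t ∈ Icc 0 x, HasDerivAt (fun s => l * (log (1 + s) - log (1 - s)))
      (l * (2 / (1 - t ^ 2))) t := fun t ht =>
    (hasDerivAt_log_one_add_sub_log_one_sub (hIoo t ht).1).const_mul l
  refine image_le_of_deriv_right_le_deriv_boundary
    (fun t ht => (hlhs t ht).continuousAt.continuousWithinAt)
    (fun t ht => (hlhs t (Ico_subset_Icc_self ht)).hasDerivWithinAt) (by simp)
    (fun t ht => (hrhs t ht).continuousAt.continuousWithinAt)
    (fun t ht => (hrhs t (Ico_subset_Icc_self ht)).hasDerivWithinAt) ?_ ⟨hx0, le_rfl⟩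
  intro t ⟨ht0, htx⟩
  have hpos : 0 < 1 - t ^ 2 := by nlinarith
  have hle : 1 - t ^ 2 ≤ 1 - (l * t) ^ 2 := by nlinarith [mul_le_one₀ hl1 hl0 hl1]
  rw [mul_comm]
  gcongr

noncomputable def biasInfo (x : ℝ) : ℝ := (1 + x) * log (1 + x) + (1 - x) * log (1 - x)

lemma biasInfo_neg (x : ℝ) : biasInfo (-x) = biasInfo x := by
  simp only [biasInfo, sub_neg_eq_add, ← sub_eq_add_neg]
  ring

lemma continuous_biasInfo : Continuous biasInfo :=
  (continuous_mul_log.comp (continuous_const.add continuous_id)).add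
    (continuous_mul_log.comp (continuous_const.sub continuous_id))

lemma hasDerivAt_biasInfo {x : ℝ} (hx : x ∈ Ioo (-1) 1) :
    HasDerivAt biasInfo (log (1 + x) - log (1 - x)) x := by
  obtain ⟨hx0, hx1⟩ := hx
  have hplus := (hasDerivAt_mul_log (x := 1 + x) (by linarith)).comp x
    ((hasDerivAt_id' x).const_add 1)
  have hminus := (hasDerivAt_mul_log (x := 1 - x) (by linarith)).comp x
    ((hasDerivAt_id' x).const_sub 1)
  exact (hplus.add hminus).congr_deriv (by ring)

lemma biasInfo_mul_le {l x : ℝ} (hl0 : 0 ≤ l) (hl1 : l ≤ 1) (hx : |x| ≤ 1) :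
    biasInfo (l * x) ≤ l ^ 2 * biasInfo x := by
  wlog hx0 : 0 ≤ x generalizing x
  · simpa [biasInfo_neg] using this (x := -x) (by rwa [abs_neg]) (by linarith)
  have hx1 : x ≤ 1 := (abs_le.mp hx).2
  have hIoo : ∀ t ∈ Ico 0 1, t ∈ Ioo (-1) 1 ∧ l * t ∈ Ioo (-1) 1 := fun t ⟨ht0, ht1⟩ =>
    ⟨⟨by linarith, ht1⟩, ⟨by nlinarith, by nlinarith⟩⟩
  refine image_le_of_deriv_right_le_deriv_boundary
    (continuous_biasInfo.comp (continuous_const_mul l)).continuousOn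
    (fun t ht => ((hasDerivAt_biasInfo (hIoo t ht).2).comp t
      ((hasDerivAt_id' t).const_mul l)).hasDerivWithinAt) (by simp [biasInfo])
    (continuous_biasInfo.const_smul (l ^ 2)).continuousOn
    (fun t ht => ((hasDerivAt_biasInfo (hIoo t ht).1).const_mul (l ^ 2)).hasDerivWithinAt)
    ?_ ⟨hx0, hx1⟩
  intro t ⟨ht0, ht1⟩
  have := mul_le_mul_of_nonneg_left (log_one_add_mul_sub_log_one_sub_mul_le hl0 hl1 ht0 ht1) hl0
  linarith

lemma binInfo_one_add_div_two (x : ℝ) :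
    binInfo ((1 + x) / 2) = biasInfo x / (2 * log 2) := by
  have hlog : ∀ y : ℝ, y / 2 * log (y / 2) = y / 2 * (log y - log 2) := fun y => by
    rcases eq_or_ne y 0 with rfl | hy
    · simp
    · rw [log_div hy two_ne_zero]
  have h1x : 1 - (1 + x) / 2 = (1 - x) / 2 := by ring
  have hlog2 : log 2 ≠ 0 := (log_pos one_lt_two).ne'
  simp only [binInfo, binEnt, logb, h1x, mul_div_assoc', hlog, biasInfo]
  field_simp
  ring

/-- Let `X` be a bit with `Pr[X=1] = α`, and let `Y` be obtained from `X` by flipping its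
value with probability `p` (a binary symmetric channel), `0 < p < 1/2`, independently of `X`;
then `Pr[Y=1] = (1−p)·α + p·(1−α)` and `I(Y) ≤ (1−2p)²·I(X)`. -/
theorem info_flip_le (p α : ℝ) (hp0 : 0 < p) (hp1 : p < 1 / 2)
    (hα0 : 0 ≤ α) (hα1 : α ≤ 1) :
    binInfo ((1 - p) * α + p * (1 - α)) ≤ (1 - 2 * p) ^ 2 * binInfo α := by
  obtain ⟨x, rfl⟩ : ∃ x, α = (1 + x) / 2 := ⟨2 * α - 1, by ring⟩
  have hflip : (1 - p) * ((1 + x) / 2) + p * (1 - (1 + x) / 2) = (1 + (1 - 2 * p) * x) / 2 := by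
    ring
  have hx : |x| ≤ 1 := abs_le.mpr ⟨by linarith, by linarith⟩
  rw [hflip, binInfo_one_add_div_two, binInfo_one_add_div_two, ← mul_div_assoc]
  have hlog2 : 0 < 2 * log 2 := by positivity
  gcongr
  exact biasInfo_mul_le (by linarith) (by linarith) hx
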